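/- arXiv:1506.07338 — 4 statements merged into one kernel-verified Lean document; each statement's English description precedes it below -/
import Mathlib

section
/- Every finite simple graph G admits an orientation in which every vertex v has outdegree at most ⌊d_G(v)/2⌋ + 1, where d_G(v) is the degree of v in G. -/
/-!
Give every vertex `v` a capacity of `⌊d(v)/2⌋ + 1` slots, so that `d(v) ≤ 2 · capacity`. Every
edge has two endpoints, so double counting shows that any `k` edges see at least `k` slots at
their endpoints; by Hall's theorem each edge can be matched to a slot at one of its endpoints.
Orienting every edge away from the endpoint holding its slot bounds each outdegree by the
capacity.
-/

open Finset

section CapacitatedHall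

variable {ι α : Type*} [DecidableEq α]

theorem Finset.exists_ncard_fiber_le_of_card_le_sum (t : ι → Finset α) (c : α → ℕ)
    (h : ∀ s : Finset ι, #s ≤ ∑ a ∈ s.biUnion t, c a) :
    ∃ f : ι → α, (∀ i, f i ∈ t i) ∧ ∀ a, {i | f i = a}.ncard ≤ c a := by
  -- Replace each `a` by `c a` copies `⟨a, j⟩` and apply Hall's theorem.
  let slots : ι → Finset (Σ a, Fin (c a)) := fun i => (t i).sigma fun _ => univ
  have hall : ∀ s : Finset ι, #s ≤ #(s.biUnion slots) := fun s => by
    have : s.biUnion slots = (s.biUnion t).sigma fun _ => univ := by ext; simp [slots]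
    simpa [this, card_sigma] using h s
  obtain ⟨g, hg_inj, hg_mem⟩ := (all_card_le_biUnion_card_iff_exists_injective slots).1 hall
  refine ⟨fun i => (g i).1, fun i => (mem_sigma.1 (hg_mem i)).1, fun a => ?_⟩
  calc {i | (g i).1 = a}.ncard
      ≤ ((({a} : Finset α).sigma fun _ => univ : Finset (Σ a, Fin (c a))) : Set _).ncard :=
        Set.ncard_le_ncard_of_injOn g (fun i hi => by simpa using hi) hg_inj.injOn (finite_toSet _)
    _ = c a := by rw [Set.ncard_coe_finset, card_sigma]; simp

theorem Finset.card_le_sum_biUnion_of_card_le [Fintype ι] (t : ι → Finset α) (c : α → ℕ)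
    {k : ℕ} (hk : 0 < k) (ht : ∀ i, k ≤ #(t i)) (hc : ∀ a, #{i | a ∈ t i} ≤ k * c a)
    (s : Finset ι) : #s ≤ ∑ a ∈ s.biUnion t, c a := by
  set W := s.biUnion t
  have hW : ∀ i ∈ s, W.bipartiteAbove (fun i a => a ∈ t i) i = t i := fun i hi => by
    ext a
    simp only [mem_bipartiteAbove, W, mem_biUnion]
    exact ⟨And.right, fun ha => ⟨⟨i, hi, ha⟩, ha⟩⟩
  refine le_of_mul_le_mul_left ?_ hk
  calc k * #s = ∑ _i ∈ s, k := by rw [sum_const, smul_eq_mul, mul_comm]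
    _ ≤ ∑ i ∈ s, #(t i) := sum_le_sum fun i _ => ht i
    _ = ∑ i ∈ s, #(W.bipartiteAbove (fun i a => a ∈ t i) i) := sum_congr rfl fun i hi => by
        rw [hW i hi]
    _ = ∑ a ∈ W, #(s.bipartiteBelow (fun i a => a ∈ t i) a) :=
        sum_card_bipartiteAbove_eq_sum_card_bipartiteBelow _
    _ ≤ ∑ a ∈ W, k * c a := sum_le_sum fun a _ =>
        (card_le_card (filter_subset_filter _ (subset_univ s))).trans (hc a)
    _ = k * ∑ a ∈ W, c a := (mul_sum _ _ _).symm

end CapacitatedHall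

namespace SimpleGraph

variable {V : Type*} (G : SimpleGraph V)

def tailOrientation (tail : G.edgeSet → V) (u v : V) : Prop :=
  ∃ h : G.Adj u v, tail ⟨s(u, v), G.mem_edgeSet.2 h⟩ = u

variable {G} {tail : G.edgeSet → V}

theorem not_tailOrientation_self (v : V) : ¬G.tailOrientation tail v v :=
  fun ⟨h, _⟩ => G.irrefl h

theorem tailOrientation_or_tailOrientation_iff_adj (htail : ∀ e : G.edgeSet, tail e ∈ (e : Sym2 V))
    (u v : V) : G.tailOrientation tail u v ∨ G.tailOrientation tail v u ↔ G.Adj u v := by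
  refine ⟨fun h => h.elim Exists.fst fun h => h.1.symm, fun h => ?_⟩
  have hswap : (⟨s(v, u), G.mem_edgeSet.2 h.symm⟩ : G.edgeSet) = ⟨s(u, v), h⟩ :=
    Subtype.ext Sym2.eq_swap
  rcases Sym2.mem_iff.1 (htail ⟨s(u, v), h⟩) with hu | hv
  · exact Or.inl ⟨h, hu⟩
  · exact Or.inr ⟨h.symm, hswap ▸ hv⟩

theorem not_tailOrientation_and_tailOrientation (u v : V) :
    ¬(G.tailOrientation tail u v ∧ G.tailOrientation tail v u) := by
  rintro ⟨⟨huv, hu⟩, ⟨hvu, hv⟩⟩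
  have hswap : (⟨s(v, u), G.mem_edgeSet.2 hvu⟩ : G.edgeSet) = ⟨s(u, v), huv⟩ :=
    Subtype.ext Sym2.eq_swap
  rw [hswap, hu] at hv
  exact huv.ne hv

theorem ncard_tailOrientation_le [Finite V] (v : V) :
    {u | G.tailOrientation tail v u}.ncard ≤ {e | tail e = v}.ncard := by
  calc {u | G.tailOrientation tail v u}.ncard
      ≤ (Subtype.val '' {e | tail e = v}).ncard := by
        refine Set.ncard_le_ncard_of_injOn (fun u => s(v, u)) ?_ ?_ (Set.toFinite _)
        · rintro u ⟨h, hu⟩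
          exact ⟨_, hu, rfl⟩
        · intro u₁ _ u₂ _ h
          exact Sym2.congr_right.1 h
    _ = {e | tail e = v}.ncard := Set.ncard_image_of_injective _ Subtype.val_injective

variable [Fintype V] [DecidableRel G.Adj]

theorem exists_tail_ncard_le_of_degree_le [DecidableEq V] (c : V → ℕ)
    (hc : ∀ v, G.degree v ≤ 2 * c v) :
    ∃ tail : G.edgeSet → V, (∀ e : G.edgeSet, tail e ∈ (e : Sym2 V)) ∧ ∀ v, {e | tail e = v}.ncard ≤ c v := by
  have hends : ∀ e : G.edgeSet, 2 ≤ #(e : Sym2 V).toFinset := fun e =>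
    (Sym2.card_toFinset_of_not_isDiag _ (G.not_isDiag_of_mem_edgeSet e.2)).ge
  have hincident : ∀ v, #{e : G.edgeSet | v ∈ (e : Sym2 V).toFinset} ≤ 2 * c v := fun v => by
    refine le_trans ?_ ((G.card_incidenceFinset_eq_degree v).trans_le (hc v))
    refine card_le_card_of_injOn Subtype.val (fun e he => ?_) Subtype.val_injective.injOn
    simpa [mem_incidenceFinset, incidenceSet] using he
  obtain ⟨tail, htail, hcard⟩ := exists_ncard_fiber_le_of_card_le_sum _ c
    (card_le_sum_biUnion_of_card_le _ c two_pos hends hincident)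
  exact ⟨tail, fun e => Sym2.mem_toFinset.1 (htail e), hcard⟩

theorem exists_orientation_ncard_le_of_degree_le (c : V → ℕ) (hc : ∀ v, G.degree v ≤ 2 * c v) :
    ∃ r : V → V → Prop, (∀ v, ¬r v v) ∧ (∀ u v, (r u v ∨ r v u) ↔ G.Adj u v) ∧
      (∀ u v, ¬(r u v ∧ r v u)) ∧ ∀ v, {u | r v u}.ncard ≤ c v := by
  classical
  obtain ⟨tail, htail, hcard⟩ := G.exists_tail_ncard_le_of_degree_le c hc
  exact ⟨G.tailOrientation tail, not_tailOrientation_self,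
    tailOrientation_or_tailOrientation_iff_adj htail, not_tailOrientation_and_tailOrientation,
    fun v => (ncard_tailOrientation_le v).trans (hcard v)⟩

end SimpleGraph

theorem orientation_outdegree_le_half_degree_add_one_general {V : Type} [Fintype V]
    (G : SimpleGraph V) [DecidableRel G.Adj] :
    ∃ r : V → V → Prop,
      (∀ v, ¬ r v v) ∧
      (∀ u v, (r u v ∨ r v u) ↔ G.Adj u v) ∧
      (∀ u v, ¬ (r u v ∧ r v u)) ∧
      (∀ v, {u | r v u}.ncard ≤ G.degree v / 2 + 1) :=
  G.exists_orientation_ncard_le_of_degree_le _ fun v => by omega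

/-- Every finite simple graph admits an orientation in which every vertex `v` has
outdegree at most `⌊d_G(v)/2⌋ + 1`. -/
theorem orientation_outdegree_le_half_degree_add_one {V : Type} [Fintype V]
    [DecidableEq V] (G : SimpleGraph V) [DecidableRel G.Adj] :
    ∃ r : V → V → Prop,
      (∀ v, ¬ r v v) ∧
      (∀ u v, (r u v ∨ r v u) ↔ G.Adj u v) ∧
      (∀ u v, ¬ (r u v ∧ r v u)) ∧
      (∀ v, {u | r v u}.ncard ≤ G.degree v / 2 + 1) :=
  orientation_outdegree_le_half_degree_add_one_general G
end

section
/- Let G be a finite simple graph whose edge set can be partitioned into k sets E_1, …, E_k such that for each i the subgraph of G with edge set E_i is acyclic (a forest). Then G admits an orientation in which every vertex has outdegree at most k. -/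
open SimpleGraph

section Aux

variable {V : Type} {F : SimpleGraph V}

private lemma aux_dist_le_of_mem_support {c u x : V} (p : F.Walk c u) (hx : x ∈ p.support) :
    F.dist c x ≤ p.length := by
  classical
  exact le_trans (F.dist_le (p.takeUntil x hx)) (p.length_takeUntil_le hx)

private lemma aux_concat_isPath {c u v : V} {p : F.Walk c v} (hp : p.IsPath)
    (h : F.Adj v u) (hu : u ∉ p.support) : (p.concat h).IsPath := by
  rw [← SimpleGraph.Walk.isPath_reverse_iff, SimpleGraph.Walk.reverse_concat]
  exact hp.reverse.cons (by simpa using hu)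

/-- In an acyclic graph, a vertex has at most one neighbor that is one step closer to `c`. -/
private lemma aux_parent_unique (hF : F.IsAcyclic) {c u v w : V}
    (hv : F.Adj v u) (hw : F.Adj w u)
    (hdv : F.dist c v + 1 = F.dist c u) (hdw : F.dist c w + 1 = F.dist c u)
    (hrv : F.Reachable c v) (hrw : F.Reachable c w) : v = w := by
  obtain ⟨p, hp, hpl⟩ := hrv.exists_path_of_dist
  obtain ⟨q, hq, hql⟩ := hrw.exists_path_of_dist
  have hup : u ∉ p.support := fun h => by
    have := aux_dist_le_of_mem_support p h; omega
  have huq : u ∉ q.support := fun h => by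
    have := aux_dist_le_of_mem_support q h; omega
  have hP : (p.concat hv).IsPath := aux_concat_isPath hp hv hup
  have hQ : (q.concat hw).IsPath := aux_concat_isPath hq hw huq
  have := (SimpleGraph.isAcyclic_iff_path_unique.mp hF) ⟨p.concat hv, hP⟩ ⟨q.concat hw, hQ⟩
  have heq : p.concat hv = q.concat hw := congrArg Subtype.val this
  obtain ⟨hvw, -⟩ := SimpleGraph.Walk.concat_inj heq
  exact hvw

/-- In an acyclic graph, adjacent vertices are at different distances from any root `c`
reachable from both. -/
private lemma aux_adj_dist_ne (hF : F.IsAcyclic) {c u v : V} (h : F.Adj u v)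
    (hru : F.Reachable c u) (hrv : F.Reachable c v) : F.dist c u ≠ F.dist c v := by
  classical
  intro hd
  obtain ⟨p, hp, hpl⟩ := hru.exists_path_of_dist
  obtain ⟨q, hq, hql⟩ := hrv.exists_path_of_dist
  have hvp : v ∉ p.support := by
    intro hmem
    have hspec := p.take_spec hmem
    have hlen : (p.takeUntil v hmem).length + (p.dropUntil v hmem).length = p.length := by
      have h' := congrArg SimpleGraph.Walk.length hspec
      rwa [SimpleGraph.Walk.length_append] at h'
    have h1 : 1 ≤ (p.dropUntil v hmem).length := by
      rcases Nat.eq_zero_or_pos (p.dropUntil v hmem).length with h0 | h0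
      · exact absurd (SimpleGraph.Walk.eq_of_length_eq_zero h0) h.ne'
      · exact h0
    have hle : F.dist c v ≤ (p.takeUntil v hmem).length := F.dist_le _
    omega
  have hP : (p.concat h).IsPath := aux_concat_isPath hp h hvp
  have := (SimpleGraph.isAcyclic_iff_path_unique.mp hF) ⟨p.concat h, hP⟩ ⟨q, hq⟩
  have heq : p.concat h = q := congrArg Subtype.val this
  have : (p.concat h).length = q.length := congrArg SimpleGraph.Walk.length heq
  rw [SimpleGraph.Walk.length_concat] at this
  omega

/-- Every finite acyclic graph has an orientation with outdegree at most one. -/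
private lemma aux_forest_orient (hF : F.IsAcyclic) :
    ∃ r : V → V → Prop,
      (∀ u v, r u v → F.Adj u v) ∧
      (∀ u v, F.Adj u v → r u v ∨ r v u) ∧
      (∀ u v, ¬ (r u v ∧ r v u)) ∧
      (∀ v, {u | r v u}.Subsingleton) := by
  classical
  set c : V → V := fun v => (F.connectedComponentMk v).out with hc
  have hreach : ∀ v, F.Reachable (c v) v := by
    intro v
    have : F.connectedComponentMk ((F.connectedComponentMk v).out) = F.connectedComponentMk v :=
      (F.connectedComponentMk v).out_eq
    exact (SimpleGraph.ConnectedComponent.eq.mp this)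
  have hcadj : ∀ {u v}, F.Adj u v → c u = c v := by
    intro u v h
    simp only [hc]
    rw [SimpleGraph.ConnectedComponent.eq.mpr h.reachable]
  refine ⟨fun u v => F.Adj u v ∧ F.dist (c u) v + 1 = F.dist (c u) u, ?_, ?_, ?_, ?_⟩
  · exact fun u v h => h.1
  · intro u v h
    have hcc := hcadj h
    have hru := hreach u
    have hrv : F.Reachable (c u) v := (hreach u).trans h.reachable
    have hne := aux_adj_dist_ne hF h hru hrv
    have h1 : F.dist (c u) u ≤ F.dist (c u) v + 1 := by
      obtain ⟨p, hp, hpl⟩ := hrv.exists_path_of_dist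
      have := F.dist_le (p.concat h.symm)
      rw [SimpleGraph.Walk.length_concat] at this
      omega
    have h2 : F.dist (c u) v ≤ F.dist (c u) u + 1 := by
      obtain ⟨p, hp, hpl⟩ := hru.exists_path_of_dist
      have := F.dist_le (p.concat h)
      rw [SimpleGraph.Walk.length_concat] at this
      omega
    rcases lt_or_gt_of_ne hne with hlt | hgt
    · right
      exact ⟨h.symm, by rw [← hcc]; omega⟩
    · left
      exact ⟨h, by omega⟩
  · rintro u v ⟨⟨h1, hd1⟩, ⟨h2, hd2⟩⟩
    rw [← hcadj h1] at hd2
    omega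
  · intro v x hx y hy
    obtain ⟨hax, hdx⟩ := hx
    obtain ⟨hay, hdy⟩ := hy
    exact aux_parent_unique hF hax.symm hay.symm hdx hdy
      ((hreach v).trans hax.reachable) ((hreach v).trans hay.reachable)

private lemma aux_ncard_iUnion_le {α : Type} [Fintype α] :
    ∀ (n : ℕ) (s : Fin n → Set α), (∀ i, (s i).Subsingleton) → (⋃ i, s i).ncard ≤ n := by
  intro n
  induction n with
  | zero => intro s _; simp [Set.ncard_eq_zero]
  | succ n ih =>
    intro s hs
    have hsplit : (⋃ i, s i) = s 0 ∪ ⋃ i : Fin n, s i.succ := by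
      ext x
      simp only [Set.mem_iUnion, Set.mem_union]
      constructor
      · rintro ⟨i, hi⟩
        rcases Fin.eq_zero_or_eq_succ i with rfl | ⟨j, rfl⟩
        · exact Or.inl hi
        · exact Or.inr ⟨j, hi⟩
      · rintro (hx | ⟨j, hj⟩)
        · exact ⟨0, hx⟩
        · exact ⟨j.succ, hj⟩
    rw [hsplit]
    calc (s 0 ∪ ⋃ i : Fin n, s i.succ).ncard
        ≤ (s 0).ncard + (⋃ i : Fin n, s i.succ).ncard := Set.ncard_union_le _ _
      _ ≤ 1 + n := by
          gcongr
          · exact (Set.ncard_le_one (Set.toFinite _)).mpr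
              (fun a ha b hb => hs 0 ha hb)
          · exact ih _ (fun i => hs i.succ)
      _ = n + 1 := by omega

end Aux

/-- If the edge set of a finite simple graph `G` can be partitioned into `k` forests,
then `G` admits an orientation in which every vertex has outdegree at most `k`. -/
theorem arboricity_orientation {V : Type} [Fintype V] (G : SimpleGraph V)
    (k : ℕ) (E : Fin k → Set (Sym2 V))
    (hdisj : ∀ i j, i ≠ j → Disjoint (E i) (E j))
    (hcover : (⋃ i, E i) = G.edgeSet)
    (hforest : ∀ i, (SimpleGraph.fromEdgeSet (E i)).IsAcyclic) :
    ∃ r : V → V → Prop,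
      (∀ v, ¬ r v v) ∧
      (∀ u v, (r u v ∨ r v u) ↔ G.Adj u v) ∧
      (∀ u v, ¬ (r u v ∧ r v u)) ∧
      (∀ v, {u | r v u}.ncard ≤ k) := by
  classical
  choose R hR1 hR2 hR3 hR4 using fun i => aux_forest_orient (hforest i)
  refine ⟨fun u v => ∃ i, R i u v, ?_, ?_, ?_, ?_⟩
  · rintro v ⟨i, hi⟩
    exact (hR1 i v v hi).ne rfl
  · intro u v
    constructor
    · rintro (⟨i, hi⟩ | ⟨i, hi⟩)
      · have := hR1 i u v hi
        rw [SimpleGraph.fromEdgeSet_adj] at this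
        have hmem : s(u, v) ∈ ⋃ j, E j := Set.mem_iUnion.mpr ⟨i, this.1⟩
        rw [hcover] at hmem
        exact (SimpleGraph.mem_edgeSet G).mp hmem
      · have := hR1 i v u hi
        rw [SimpleGraph.fromEdgeSet_adj] at this
        have hmem : s(v, u) ∈ ⋃ j, E j := Set.mem_iUnion.mpr ⟨i, this.1⟩
        rw [hcover] at hmem
        exact ((SimpleGraph.mem_edgeSet G).mp hmem).symm
    · intro h
      have hmem : s(u, v) ∈ ⋃ j, E j := by rw [hcover]; exact h
      obtain ⟨i, hi⟩ := Set.mem_iUnion.mp hmem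
      have hadj : (SimpleGraph.fromEdgeSet (E i)).Adj u v :=
        (SimpleGraph.fromEdgeSet_adj _).mpr ⟨hi, h.ne⟩
      rcases hR2 i u v hadj with h' | h'
      · exact Or.inl ⟨i, h'⟩
      · exact Or.inr ⟨i, h'⟩
  · rintro u v ⟨⟨i, hi⟩, ⟨j, hj⟩⟩
    by_cases hij : i = j
    · subst hij
      exact hR3 i u v ⟨hi, hj⟩
    · have h1 := hR1 i u v hi
      have h2 := hR1 j v u hj
      rw [SimpleGraph.fromEdgeSet_adj] at h1 h2
      have : s(u, v) ∈ E i ∩ E j := ⟨h1.1, by rw [Sym2.eq_swap]; exact h2.1⟩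
      exact Set.notMem_empty _ (((hdisj i j hij).inter_eq) ▸ this)
  · intro v
    have heq : {u | ∃ i, R i v u} = ⋃ i, {u | R i v u} := by
      ext x; simp [Set.mem_iUnion]
    rw [heq]
    exact aux_ncard_iUnion_le k _ (fun i => hR4 i v)
end

section
/- Let G be a finite simple graph admitting a proper vertex colouring with k colours. Then G admits an orientation in which every directed path has at most k vertices; that is, there is no sequence of k+1 distinct vertices v_0, v_1, …, v_k with r(v_i, v_{i+1}) for all 0 ≤ i < k. -/
/-!
Orient every edge from the smaller colour to the larger one. Colours strictly increase along
a directed path, so a path on `k + 1` vertices would inject `Fin (k + 1)` into the `k` colours.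
-/

namespace SimpleGraph

variable {V α : Type*} (G : SimpleGraph V) (c : V → α)

def colorOrientation [LT α] (u v : V) : Prop :=
  G.Adj u v ∧ c u < c v

theorem colorOrientation_irrefl [Preorder α] (v : V) : ¬ G.colorOrientation c v v :=
  fun h => h.2.false

theorem colorOrientation_asymm [Preorder α] (u v : V) :
    ¬ (G.colorOrientation c u v ∧ G.colorOrientation c v u) :=
  fun ⟨huv, hvu⟩ => huv.2.asymm hvu.2

theorem colorOrientation_or_swap_iff_adj [LinearOrder α] (hc : ∀ u v, G.Adj u v → c u ≠ c v) (u v : V) :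
    (G.colorOrientation c u v ∨ G.colorOrientation c v u) ↔ G.Adj u v := by
  refine ⟨fun h => h.elim And.left (fun h => h.1.symm), fun h => ?_⟩
  rcases (hc u v h).lt_or_gt with hlt | hgt
  · exact Or.inl ⟨h, hlt⟩
  · exact Or.inr ⟨h.symm, hgt⟩

theorem strictMono_color_of_colorOrientation_path [Preorder α] {n : ℕ} (p : Fin (n + 1) → V)
    (hp : ∀ i : Fin n, G.colorOrientation c (p i.castSucc) (p i.succ)) :
    StrictMono (c ∘ p) :=
  Fin.strictMono_iff_lt_succ.2 fun i => (hp i).2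

end SimpleGraph

theorem orientation_no_long_directed_path_general {V : Type} (G : SimpleGraph V)
    (k : ℕ) (c : V → Fin k) (hc : ∀ u v, G.Adj u v → c u ≠ c v) :
    ∃ r : V → V → Prop,
      (∀ v, ¬ r v v) ∧
      (∀ u v, (r u v ∨ r v u) ↔ G.Adj u v) ∧
      (∀ u v, ¬ (r u v ∧ r v u)) ∧
      ¬ ∃ p : Fin (k + 1) → V, Function.Injective p ∧
          ∀ i : Fin k, r (p i.castSucc) (p i.succ) := by
  refine ⟨G.colorOrientation c, G.colorOrientation_irrefl c,
    G.colorOrientation_or_swap_iff_adj c hc, G.colorOrientation_asymm c, ?_⟩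
  rintro ⟨p, -, hp⟩
  have hmono := G.strictMono_color_of_colorOrientation_path c p hp
  exact (Fin.le_of_injective _ hmono.injective).not_gt k.lt_succ_self

/-- If a finite simple graph `G` has a proper vertex colouring with `k` colours, then `G`
admits an orientation in which every directed path has at most `k` vertices. -/
theorem orientation_no_long_directed_path {V : Type} [Fintype V] (G : SimpleGraph V)
    (k : ℕ) (c : V → Fin k) (hc : ∀ u v, G.Adj u v → c u ≠ c v) :
    ∃ r : V → V → Prop,
      (∀ v, ¬ r v v) ∧
      (∀ u v, (r u v ∨ r v u) ↔ G.Adj u v) ∧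
      (∀ u v, ¬ (r u v ∧ r v u)) ∧
      ¬ ∃ p : Fin (k + 1) → V, Function.Injective p ∧
          ∀ i : Fin k, r (p i.castSucc) (p i.succ) :=
  orientation_no_long_directed_path_general G k c hc
end

section
/- Every finite simple graph G with maximum degree at most 3 admits an orientation with maximum outdegree at most 2 such that every vertex of outdegree exactly 2 has an out-neighbour whose outdegree is at most 1. That is, there is an orientation r of G with: every vertex has outdegree at most 2, and for every vertex u with outdegree 2 there exists a vertex w with r(u,w) such that w has outdegree at most 1. -/
/-!
Choose a star forest `F ≤ G` covering every non-isolated vertex (a choice maximising the set of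
covered vertices works). Deleting `F` leaves a graph of maximum degree at most `2`, which by Hall's
theorem (edges versus their endpoints) has an orientation with outdegree at most `1`. Orienting the
edges of `F` from leaves to centres adds at most one out-arc per vertex and none at centres, so a
vertex of outdegree `2` is a leaf, and its centre has outdegree at most `1`.
-/

open Finset Function

namespace SimpleGraph

variable {V : Type*}

section Orientation

structure IsOrientation (G : SimpleGraph V) (r : V → V → Prop) : Prop where
  or_iff_adj : ∀ u v, r u v ∨ r v u ↔ G.Adj u v
  asymm : ∀ u v, r u v → ¬ r v u

theorem IsOrientation.irrefl {G : SimpleGraph V} {r : V → V → Prop} (hr : G.IsOrientation r)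
    (v : V) : ¬ r v v :=
  fun hv => hr.asymm v v hv hv

theorem IsOrientation.sup {G H : SimpleGraph V} {r s : V → V → Prop} (hr : G.IsOrientation r)
    (hs : H.IsOrientation s) (hGH : Disjoint G H) :
    (G ⊔ H).IsOrientation fun u v => r u v ∨ s u v where
  or_iff_adj u v := by
    rw [sup_adj, ← hr.or_iff_adj, ← hs.or_iff_adj]
    tauto
  asymm u v := by
    have hdisj := disjoint_left.1 hGH u v
    rintro (huv | huv) (hvu | hvu)
    · exact hr.asymm u v huv hvu
    · exact hdisj ((hr.or_iff_adj u v).1 (.inl huv)) ((hs.or_iff_adj u v).1 (.inr hvu))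
    · exact hdisj ((hr.or_iff_adj u v).1 (.inr hvu)) ((hs.or_iff_adj u v).1 (.inl huv))
    · exact hs.asymm u v huv hvu

variable [Fintype V] [DecidableEq V] (G : SimpleGraph V) [DecidableRel G.Adj]

theorem card_le_card_endpoints_of_degree_le_two (hG : ∀ v, G.degree v ≤ 2)
    (A : Finset G.edgeSet) : #A ≤ #{v | ∃ e ∈ A, v ∈ (e : Sym2 V)} := by
  set U : Finset V := {v | ∃ e ∈ A, v ∈ (e : Sym2 V)}
  -- double counting: every edge of `A` has both endpoints in `U`, every vertex lies on at most two
  suffices #A * 2 ≤ #U * 2 by omega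
  refine card_mul_le_card_mul (fun (e : G.edgeSet) v => v ∈ (e : Sym2 V)) ?_ fun v _ => ?_
  · rintro ⟨e, he⟩ heA
    induction e using Sym2.ind with
    | h x y =>
      rw [← card_pair (G.mem_edgeSet.1 he).ne]
      refine card_le_card fun z hz => ?_
      have hze : z ∈ s(x, y) := Sym2.mem_iff.2 (by simpa using hz)
      simp only [bipartiteAbove, mem_filter, U]
      exact ⟨⟨mem_univ z, _, heA, hze⟩, hze⟩
  · calc #(A.bipartiteBelow _ v) ≤ #(G.incidenceFinset v) := by
          refine card_le_card_of_injOn Subtype.val (fun e he => ?_) Subtype.val_injective.injOn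
          simp only [bipartiteBelow, coe_filter, Set.mem_ofPred_eq] at he
          rw [mem_coe, mem_incidenceFinset]
          exact ⟨e.2, he.2⟩
      _ ≤ 2 := (G.card_incidenceFinset_eq_degree v).trans_le (hG v)

theorem exists_isOrientation_ncard_le_one (hG : ∀ v, G.degree v ≤ 2) :
    ∃ r, G.IsOrientation r ∧ ∀ v, {u | r v u}.ncard ≤ 1 := by
  obtain ⟨tail, htail_inj, htail_mem⟩ := (Fintype.all_card_le_filter_rel_iff_exists_injective
    (fun (e : G.edgeSet) v => v ∈ (e : Sym2 V))).1 (G.card_le_card_endpoints_of_degree_le_two hG)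
  have hswap : ∀ {u v} (h : G.Adj u v), (⟨s(v, u), h.symm⟩ : G.edgeSet) = ⟨s(u, v), h⟩ :=
    fun _ => Subtype.ext Sym2.eq_swap
  refine ⟨fun u v => ∃ h : G.Adj u v, tail ⟨s(u, v), h⟩ = u, ⟨fun u v => ?_, ?_⟩, fun u => ?_⟩
  · refine ⟨fun h => h.elim (fun ⟨h, _⟩ => h) (fun ⟨h, _⟩ => h.symm), fun h => ?_⟩
    rcases Sym2.mem_iff.1 (htail_mem ⟨s(u, v), h⟩) with hu | hv
    · exact .inl ⟨h, hu⟩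
    · exact .inr ⟨h.symm, hswap h ▸ hv⟩
  · rintro u v ⟨h, hu⟩ ⟨h', hv⟩
    exact h.ne (hu.symm.trans (hswap h ▸ hv))
  · refine (Set.ncard_le_one).2 fun v ⟨_, hv⟩ w ⟨_, hw⟩ => ?_
    exact Sym2.congr_right.1 (congrArg Subtype.val (htail_inj (hv.trans hw.symm)))

end Orientation

section Galaxy

def fromFun (f : V → V) : SimpleGraph V := fromRel fun x y => f x = y

theorem isOrientation_fromFun {f : V → V} (hf : ∀ v, f (f v) = f v) :
    (fromFun f).IsOrientation fun u v => u ≠ v ∧ f u = v where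
  or_iff_adj u v := by
    rw [fromFun, fromRel_adj, ne_comm (a := v)]
    tauto
  asymm := by
    rintro u v ⟨huv, rfl⟩ ⟨-, hvu⟩
    exact huv (hvu.symm.trans (hf u))

/-- `f` encodes a star forest in `G`: it sends each leaf to the centre of its star and fixes
all other vertices. The vertices covered by the star forest form `(fromFun f).support`. -/
structure IsGalaxy (G : SimpleGraph V) (f : V → V) : Prop where
  adj_apply : ∀ v, f v ≠ v → G.Adj v (f v)
  apply_apply : ∀ v, f (f v) = f v

variable {G : SimpleGraph V} {f : V → V} {a b v w : V}

theorem notMem_support_fromFun :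
    v ∉ (fromFun f).support ↔ f v = v ∧ ∀ u, f u = v → u = v := by
  simp only [mem_support, fromFun, fromRel_adj, not_exists, not_and]
  refine ⟨fun h => ⟨by_contra fun hv => h _ (Ne.symm hv) (.inl rfl),
    fun u hu => by_contra fun huv => h u (Ne.symm huv) (.inr hu)⟩, ?_⟩
  rintro ⟨hv, hu⟩ w hvw (h | h)
  · exact hvw (hv ▸ h)
  · exact hvw (hu w h).symm

theorem IsGalaxy.fromFun_le (hf : G.IsGalaxy f) : fromFun f ≤ G := by
  intro x y hxy
  rcases (fromRel_adj _ _ _).1 hxy with ⟨hne, rfl | rfl⟩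
  · exact hf.adj_apply x (Ne.symm hne)
  · exact (hf.adj_apply y hne).symm

theorem isGalaxy_id : G.IsGalaxy id := ⟨fun _ h => absurd rfl h, fun _ => rfl⟩

section Update

variable [DecidableEq V]

theorem fromFun_update_adj (h : a ≠ b) : (fromFun (update f a b)).Adj a b :=
  (fromRel_adj _ _ _).2 ⟨h, .inl (update_self ..)⟩

theorem mem_support_fromFun_update (hv : v ∈ (fromFun f).support) (hva : v ≠ a)
    (hfa : f a ≠ v) : v ∈ (fromFun (update f a b)).support := by
  obtain ⟨u, hvu⟩ := (mem_support _).1 hv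
  refine (mem_support _).2 ⟨u, (fromRel_adj _ _ _).2 ⟨hvu.ne, ?_⟩⟩
  rcases ((fromRel_adj _ _ _).1 hvu).2 with h | h
  · exact .inl (by rwa [update_of_ne hva])
  · exact .inr (by rwa [update_of_ne (by rintro rfl; exact hfa h)])

theorem IsGalaxy.update_self_of_apply_ne (hf : G.IsGalaxy f) (hw : f w ≠ w) :
    G.IsGalaxy (update f w w) := by
  have hne : ∀ x, f x ≠ w := fun x hx => hw (hx ▸ hf.apply_apply x)
  refine ⟨fun x hx => ?_, fun x => ?_⟩
  · rcases eq_or_ne x w with rfl | hxw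
    · simp at hx
    · rw [update_of_ne hxw] at hx ⊢
      exact hf.adj_apply x hx
  · rcases eq_or_ne x w with rfl | hxw
    · simp
    · rw [update_of_ne hxw, update_of_ne (hne x), hf.apply_apply]

theorem IsGalaxy.update_of_notMem_support (hf : G.IsGalaxy f)
    (hv : v ∉ (fromFun f).support) (hvw : G.Adj v w) (hw : f w = w) :
    G.IsGalaxy (update f v w) := by
  obtain ⟨-, hv⟩ := notMem_support_fromFun.1 hv
  refine ⟨fun x hx => ?_, fun x => ?_⟩
  · rcases eq_or_ne x v with rfl | hxv
    · simpa
    · rw [update_of_ne hxv] at hx ⊢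
      exact hf.adj_apply x hx
  · rcases eq_or_ne x v with rfl | hxv
    · simp [hvw.ne.symm, hw]
    · rw [update_of_ne hxv, update_of_ne (fun h => hxv (hv x h)), hf.apply_apply]

theorem IsGalaxy.exists_insert_subset_support (hf : G.IsGalaxy f) (hvw : G.Adj v w)
    (hw : f w = w) : ∃ g, G.IsGalaxy g ∧ insert v (fromFun f).support ⊆ (fromFun g).support := by
  by_cases hv : v ∈ (fromFun f).support
  · exact ⟨f, hf, Set.insert_subset hv le_rfl⟩
  obtain ⟨hfv, -⟩ := notMem_support_fromFun.1 hv
  refine ⟨update f v w, hf.update_of_notMem_support hv hvw hw,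
    Set.insert_subset ⟨w, fromFun_update_adj hvw.ne⟩ fun x hx => ?_⟩
  exact mem_support_fromFun_update hx (by rintro rfl; exact hv hx)
    (by rw [hfv]; rintro rfl; exact hv hx)

theorem IsGalaxy.exists_support_ssubset (hf : G.IsGalaxy f) (hv : v ∈ G.support)
    (hv' : v ∉ (fromFun f).support) :
    ∃ g, G.IsGalaxy g ∧ (fromFun f).support ⊂ (fromFun g).support := by
  obtain ⟨w, hvw⟩ := (mem_support _).1 hv
  by_cases hw : f w = w
  · obtain ⟨g, hg, hsub⟩ := hf.exists_insert_subset_support hvw hw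
    exact ⟨g, hg, (Set.ssubset_insert hv').trans_subset hsub⟩
  -- `w` is a leaf: detach it from its centre `f w`, make it the centre of a star with leaf `v`,
  -- and then cover `f w` again, in case `w` was its only leaf
  have hv₁ : v ∉ (fromFun (update f w w)).support := by
    rw [notMem_support_fromFun] at hv' ⊢
    refine ⟨by rw [update_of_ne hvw.ne, hv'.1], fun u hu => ?_⟩
    rcases eq_or_ne u w with rfl | huw
    · exact absurd (by simpa using hu.symm) hvw.ne
    · exact hv'.2 u (by rwa [update_of_ne huw] at hu)
  have hf₂ := (hf.update_self_of_apply_ne hw).update_of_notMem_support hv₁ hvw (update_self ..)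
  obtain ⟨g, hg, hsub⟩ := hf₂.exists_insert_subset_support (hf.adj_apply w hw).symm
    (by rw [update_of_ne hvw.ne.symm, update_self])
  refine ⟨g, hg, (Set.ssubset_insert hv').trans_subset (subset_trans ?_ hsub)⟩
  rintro x (rfl | hx)
  · exact .inr ⟨w, fromFun_update_adj hvw.ne⟩
  rcases eq_or_ne x (f w) with rfl | hxc
  · exact .inl rfl
  refine .inr ?_
  rcases eq_or_ne x w with rfl | hxw
  · exact (mem_support _).2 ⟨v, (fromFun_update_adj hvw.ne).symm⟩
  have hxv : x ≠ v := by rintro rfl; exact hv' hx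
  exact mem_support_fromFun_update (mem_support_fromFun_update hx hxw (Ne.symm hxc)) hxv
    (by rw [update_of_ne hvw.ne, (notMem_support_fromFun.1 hv').1]; exact hxv.symm)

end Update

theorem exists_isGalaxy_support_subset [Finite V] (G : SimpleGraph V) :
    ∃ f, G.IsGalaxy f ∧ G.support ⊆ (fromFun f).support := by
  classical
  obtain ⟨f, hf, hmax⟩ := Set.exists_max_image {f | G.IsGalaxy f}
    (fun f => (fromFun f).support.ncard) (Set.toFinite _) ⟨id, isGalaxy_id⟩
  refine ⟨f, hf, fun v hv => by_contra fun hv' => ?_⟩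
  obtain ⟨g, hg, hfg⟩ := hf.exists_support_ssubset hv hv'
  exact (hmax g hg).not_gt (Set.ncard_lt_ncard hfg)

end Galaxy

theorem degree_sdiff_lt [Fintype V] {G S : SimpleGraph V} [DecidableRel G.Adj]
    [DecidableRel S.Adj] {v : V} (hS : S ≤ G) (hv : v ∈ S.support) :
    (G \ S).degree v < G.degree v := by
  obtain ⟨w, hvw⟩ := (mem_support _).1 hv
  rw [← card_neighborFinset_eq_degree, ← card_neighborFinset_eq_degree]
  refine card_lt_card ((ssubset_iff_of_subset fun u hu => ?_).2 ⟨w, ?_, ?_⟩)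
  · simp only [mem_neighborFinset, sdiff_adj] at hu ⊢
    exact hu.1
  · exact (mem_neighborFinset _ _ _).2 (hS hvw)
  · simp [hvw]

end SimpleGraph

section Relation

variable {α : Type*}

theorem ncard_setOf_or_apply_le [Finite α] (r : α → α → Prop) (f : α → α) (u : α) :
    {w | r u w ∨ (u ≠ w ∧ f u = w)}.ncard ≤ {w | r u w}.ncard + 1 :=
  calc _ ≤ ({w | r u w} ∪ {f u}).ncard :=
        Set.ncard_le_ncard fun w hw => hw.elim .inl fun h => .inr h.2.symm
    _ ≤ _ := (Set.ncard_union_le _ _).trans (by rw [Set.ncard_singleton])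

theorem setOf_or_apply_eq_of_apply_eq (r : α → α → Prop) {f : α → α} {u : α}
    (hu : f u = u) : {w | r u w ∨ (u ≠ w ∧ f u = w)} = {w | r u w} := by
  ext w
  simp only [Set.mem_ofPred_eq, hu, or_iff_left_iff_imp, and_imp]
  exact fun huw hwu => absurd hwu huw

end Relation

open SimpleGraph

theorem subcubic_good_orientation_general {V : Type} [Fintype V]
    (G : SimpleGraph V) [DecidableRel G.Adj] (hdeg : ∀ v, G.degree v ≤ 3) :
    ∃ r : V → V → Prop,
      (∀ v, ¬ r v v) ∧
      (∀ u v, (r u v ∨ r v u) ↔ G.Adj u v) ∧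
      (∀ u v, ¬ (r u v ∧ r v u)) ∧
      (∀ v, {u | r v u}.ncard ≤ 2) ∧
      (∀ u, {x | r u x}.ncard = 2 → ∃ w, r u w ∧ {x | r w x}.ncard ≤ 1) := by
  classical
  obtain ⟨f, hf, hsupp⟩ := G.exists_isGalaxy_support_subset
  have hdeg₂ : ∀ v, (G \ fromFun f).degree v ≤ 2 := fun v => by
    by_cases hv : v ∈ G.support
    · have := degree_sdiff_lt hf.fromFun_le (hsupp hv)
      have := hdeg v
      omega
    · have := degree_le_of_le (v := v) (sdiff_le : G \ fromFun f ≤ G)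
      have := (G.degree_eq_zero_iff_notMem_support v).2 hv
      omega
  obtain ⟨r, hr, hr₁⟩ := exists_isOrientation_ncard_le_one _ hdeg₂
  have ho := hr.sup (isOrientation_fromFun hf.apply_apply) disjoint_sdiff_self_left
  rw [sdiff_sup_cancel hf.fromFun_le] at ho
  refine ⟨_, ho.irrefl, ho.or_iff_adj, fun u v h => ho.asymm u v h.1 h.2,
    fun v => (ncard_setOf_or_apply_le r f v).trans (by have := hr₁ v; omega), fun u hu => ?_⟩
  have hfu : f u ≠ u := fun h => by
    rw [setOf_or_apply_eq_of_apply_eq r h] at hu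
    have := hr₁ u
    omega
  refine ⟨f u, .inr ⟨hfu.symm, rfl⟩, ?_⟩
  rw [setOf_or_apply_eq_of_apply_eq r (hf.apply_apply u)]
  exact hr₁ (f u)

/-- Every finite subcubic simple graph admits an orientation with maximum outdegree at
most `2` in which every vertex of outdegree exactly `2` has an out-neighbour of
outdegree at most `1`. -/
theorem subcubic_good_orientation {V : Type} [Fintype V] [DecidableEq V]
    (G : SimpleGraph V) [DecidableRel G.Adj] (hdeg : ∀ v, G.degree v ≤ 3) :
    ∃ r : V → V → Prop,
      (∀ v, ¬ r v v) ∧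
      (∀ u v, (r u v ∨ r v u) ↔ G.Adj u v) ∧
      (∀ u v, ¬ (r u v ∧ r v u)) ∧
      (∀ v, {u | r v u}.ncard ≤ 2) ∧
      (∀ u, {x | r u x}.ncard = 2 → ∃ w, r u w ∧ {x | r w x}.ncard ≤ 1) :=
  subcubic_good_orientation_general G hdeg
end
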